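/- arXiv:2412.15769 — 3 statements merged into one kernel-verified Lean document; each statement's English description precedes it below -/
import Mathlib

section
/- Let m ≥ 3, and let u_E, u₁,…,u_m ∈ ℤ³ all have last coordinate 1. Suppose for each j (indices mod m) there exist integers a_j, b_j with u_{j−1} + u_{j+1} + a_j u_j + b_j u_E = 0 and a_j + b_j = −2. Given real numbers w_E, w₁,…,w_m, define t_j = w_{j−1} + w_{j+1} + a_j w_j + b_j w_E. Then ∑_{j=1}^{m} t_j (u_j − u_E) = 0. -/
/-!
Put `V j = u_j - u_E`. Because `a_j + b_j = -2`, the relations become the homogeneous equations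
`V_{j-1} + V_{j+1} + a_j V_j = 0`, i.e. `L V = 0` for the cyclic second-order operator
`(L x)_j = x_{j-1} + x_{j+1} + a_j x_j`. Since `t = L w + b w_E` and `L` is symmetric,
`∑ t_j V_j = ∑ w_j (L V)_j + w_E ∑ b_j V_j`; the first sum vanishes, and so does the second,
being `-∑ (a_j + 2) V_j = -∑ (L 1)_j V_j = -∑ (L V)_j`.
-/

open Finset

section JacobiOp

variable {G R M : Type*} [AddCommGroup G] [CommRing R] [AddCommGroup M] [Module R M]

def jacobiOp (α : G → R) (s : G) (x : G → M) (j : G) : M :=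
  x (j - s) + x (j + s) + α j • x j

theorem jacobiOp_sub_const_eq_zero {α β : G → R} {s : G} {x : G → M} {e : M}
    (hx : ∀ j, x (j - s) + x (j + s) + α j • x j + β j • e = 0) (hαβ : ∀ j, α j + β j = -2) :
    jacobiOp α s (fun j => x j - e) = 0 := by
  funext j
  have hβ : β j = -(α j + 2) := by linear_combination hαβ j
  rw [jacobiOp, Pi.zero_apply, ← hx j, hβ]
  module

variable [Fintype G]

theorem sum_comp_sub_smul (c : G → R) (x : G → M) (s : G) :
    ∑ j, c (j - s) • x j = ∑ j, c j • x (j + s) :=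
  Fintype.sum_equiv (Equiv.subRight s) _ _ fun j => by simp

theorem sum_comp_add_smul (c : G → R) (x : G → M) (s : G) :
    ∑ j, c (j + s) • x j = ∑ j, c j • x (j - s) :=
  Fintype.sum_equiv (Equiv.addRight s) _ _ fun j => by simp

theorem sum_jacobiOp_smul (α : G → R) (s : G) (c : G → R) (x : G → M) :
    ∑ j, jacobiOp α s c j • x j = ∑ j, c j • jacobiOp α s x j := by
  simp only [jacobiOp, add_smul, smul_add, sum_add_distrib, sum_comp_sub_smul, sum_comp_add_smul,
    smul_eq_mul, mul_smul, smul_comm (c _) (α _)]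
  abel

theorem sum_smul_eq_zero_of_jacobiOp_eq_zero {α β : G → R} {s : G} {x : G → M}
    (hx : jacobiOp α s x = 0) (hαβ : ∀ j, α j + β j = -2) : ∑ j, β j • x j = 0 := by
  have h := sum_jacobiOp_smul α s 1 x
  simp only [hx, Pi.zero_apply, smul_zero, sum_const_zero] at h
  rw [← neg_eq_zero, ← h, ← sum_neg_distrib]
  refine sum_congr rfl fun j _ => ?_
  rw [← neg_smul, jacobiOp]
  congr 1
  simp only [Pi.one_apply, smul_eq_mul, mul_one]
  linear_combination -hαβ j

end JacobiOp

theorem sum_t_smul_eq_zero_general (m : ℕ) [NeZero m]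
    (uE : Fin 3 → ℤ) (u : ZMod m → Fin 3 → ℤ) (a b : ZMod m → ℤ)
    (hrel : ∀ j, u (j - 1) + u (j + 1) + a j • u j + b j • uE = 0)
    (hab : ∀ j, a j + b j = -2)
    (wE : ℝ) (w : ZMod m → ℝ) (t : ZMod m → ℝ)
    (ht : ∀ j, t j = w (j - 1) + w (j + 1) + (a j : ℝ) * w j + (b j : ℝ) * wE) :
    ∑ j : ZMod m, t j • ((fun i => (u j i : ℝ)) - fun i => (uE i : ℝ)) = 0 := by
  set V : ZMod m → Fin 3 → ℝ := fun j => (fun i => (u j i : ℝ)) - fun i => (uE i : ℝ)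
  have hab' (j) : (a j : ℝ) + b j = -2 := by exact_mod_cast hab j
  have hV : jacobiOp (fun j => (a j : ℝ)) 1 V = 0 := by
    refine jacobiOp_sub_const_eq_zero (β := fun j => (b j : ℝ)) (fun j => ?_) hab'
    funext i
    simpa using congr_arg (fun v : Fin 3 → ℤ => (v i : ℝ)) (hrel j)
  have ht' : t = fun j => jacobiOp (fun j => (a j : ℝ)) 1 w j + (b j : ℝ) * wE := by
    funext j; rw [ht]; rfl
  calc ∑ j, t j • V j
      = ∑ j, w j • jacobiOp (fun j => (a j : ℝ)) 1 V j + wE • ∑ j, (b j : ℝ) • V j := by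
        simp only [ht', add_smul, sum_add_distrib, sum_jacobiOp_smul, smul_sum, mul_comm _ wE,
          mul_smul]
    _ = 0 := by
        simp [hV, sum_smul_eq_zero_of_jacobiOp_eq_zero hV hab']

/-- Closing lemma: with height-1 vectors `u_E, u₁,…,u_m ∈ ℤ³` satisfying the
quadrilateral relations `u_{j-1} + u_{j+1} + a_j u_j + b_j u_E = 0`, `a_j + b_j = -2`
(indices mod `m`), and `t_j = w_{j-1} + w_{j+1} + a_j w_j + b_j w_E`, one has
`∑ t_j (u_j − u_E) = 0`. -/
theorem sum_t_smul_eq_zero (m : ℕ) [NeZero m] (hm : 3 ≤ m)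
    (uE : Fin 3 → ℤ) (u : ZMod m → Fin 3 → ℤ) (a b : ZMod m → ℤ)
    (huE : uE 2 = 1) (hu : ∀ j, u j 2 = 1)
    (hrel : ∀ j, u (j - 1) + u (j + 1) + a j • u j + b j • uE = 0)
    (hab : ∀ j, a j + b j = -2)
    (wE : ℝ) (w : ZMod m → ℝ) (t : ZMod m → ℝ)
    (ht : ∀ j, t j = w (j - 1) + w (j + 1) + (a j : ℝ) * w j + (b j : ℝ) * wE) :
    ∑ j : ZMod m, t j • ((fun i => (u j i : ℝ)) - fun i => (uE i : ℝ)) = 0 :=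
  sum_t_smul_eq_zero_general m uE u a b hrel hab wE w t ht
end

section
/- Let m ≥ 3 and suppose u_E, u₁,…,u_m ∈ ℤ³ have last coordinate 1 and satisfy the relations u_{j−1}+u_{j+1}+a_j u_j + b_j u_E = 0 with a_j + b_j = −2 (indices mod m). Regard the differences u_j − u_E as vectors in ℤ² (first two coordinates) and let J₂ be rotation by 90°, J₂(x,y) = (−y,x). Given w's and t_j = w_{j−1}+w_{j+1}+a_j w_j + b_j w_E, define points p₀ ∈ ℝ² arbitrary and p_j = p_{j−1} + t_j J₂(u_j − u_E). Then p_m = p₀, i.e. the polygon closes. -/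
/-!
Write `L_a f (j) = f (j - 1) + f (j + 1) + a j • f j` for the cyclic Jacobi operator.
Since `a + b = -2`, the relations say exactly that `v = u - u_E` satisfies `L_a v = 0`, and the
lengths are `t = L_a (w - w_E)`. The operator `L_a` is symmetric for the pairing
`⟨f, v⟩ = ∑ f j • v j`, so `∑ t j • v j = ⟨w - w_E, L_a v⟩ = 0`. The edge vectors of the polygon
are the images of `t j • v j` under the linear map `J₂ ∘ ū`, so they sum to zero.
-/

def J2 (v : ℝ × ℝ) : ℝ × ℝ := (-v.2, v.1)

def ubar (v : Fin 3 → ℤ) : ℝ × ℝ := ((v 0 : ℝ), (v 1 : ℝ))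

open Finset

namespace ZMod

variable {m : ℕ} [NeZero m] {M : Type*} [AddCommMonoid M]

theorem sum_range_natCast (f : ZMod m → M) : ∑ i ∈ range m, f i = ∑ x, f x := by
  refine sum_nbij' (fun i => (i : ZMod m)) ZMod.val (fun _ _ => mem_univ _)
    (fun x _ => mem_range.2 (ZMod.val_lt x)) (fun i hi => ?_) (fun x _ => ZMod.natCast_zmod_val x)
    (fun _ _ => rfl)
  exact ZMod.val_natCast_of_lt (mem_range.1 hi)

theorem sum_comp_add_one (f : ZMod m → M) : ∑ x, f (x + 1) = ∑ x, f x :=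
  Equiv.sum_comp (Equiv.addRight 1) f

end ZMod

section CyclicJacobi

variable {m : ℕ} {R M : Type*} [CommRing R] [AddCommGroup M] [Module R M]

def cyclicJacobi (a : ZMod m → R) (f : ZMod m → M) (j : ZMod m) : M :=
  f (j - 1) + f (j + 1) + a j • f j

theorem cyclicJacobi_sub_const (a : ZMod m → R) (f : ZMod m → M) (c : M) (j : ZMod m) :
    cyclicJacobi a (fun i => f i - c) j = cyclicJacobi a f j - (2 + a j) • c := by
  simp only [cyclicJacobi, smul_sub, add_smul, two_smul]
  abel

theorem sum_cyclicJacobi_smul [NeZero m] (a : ZMod m → R) (w : ZMod m → R) (v : ZMod m → M) :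
    ∑ j, cyclicJacobi a w j • v j = ∑ j, w j • cyclicJacobi a v j := by
  have shift_down : ∑ j, w (j - 1) • v j = ∑ j, w j • v (j + 1) := by
    rw [← ZMod.sum_comp_add_one]
    simp only [add_sub_cancel_right]
  have shift_up : ∑ j, w (j + 1) • v j = ∑ j, w j • v (j - 1) := by
    rw [← ZMod.sum_comp_add_one (fun j => w j • v (j - 1))]
    simp only [add_sub_cancel_right]
  simp only [cyclicJacobi, add_smul, smul_add, sum_add_distrib, shift_down, shift_up, smul_eq_mul,
    mul_comm (a _), mul_smul]
  abel

theorem sum_smul_sub_eq_zero_of_relations [NeZero m] (U : ZMod m → M) (UE : M)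
    (a b : ZMod m → R) (hrel : ∀ j, U (j - 1) + U (j + 1) + a j • U j + b j • UE = 0)
    (hab : ∀ j, a j + b j = -2) (wE : R) (w : ZMod m → R) :
    ∑ j, (w (j - 1) + w (j + 1) + a j * w j + b j * wE) • (U j - UE) = 0 := by
  have hb : ∀ j, b j = -(2 + a j) := fun j => by linear_combination hab j
  have hU : ∀ j, cyclicJacobi a (fun i => U i - UE) j = 0 := fun j => by
    rw [cyclicJacobi_sub_const, ← hrel j, hb, neg_smul, ← sub_eq_add_neg, cyclicJacobi]
  have hw : ∀ j, w (j - 1) + w (j + 1) + a j * w j + b j * wE =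
      cyclicJacobi a (fun i => w i - wE) j := fun j => by
    rw [cyclicJacobi_sub_const, hb, cyclicJacobi, smul_eq_mul, smul_eq_mul]
    ring
  simp only [hw, sum_cyclicJacobi_smul, hU, smul_zero, sum_const_zero]

end CyclicJacobi

def ubarHom : (Fin 3 → ℤ) →+ ℝ × ℝ :=
  AddMonoidHom.mk' ubar fun v w => by simp [ubar]

theorem ubarHom_apply (v : Fin 3 → ℤ) : ubarHom v = ubar v := rfl

def J2Linear : (ℝ × ℝ) →ₗ[ℝ] ℝ × ℝ :=
  (-LinearMap.snd ℝ ℝ ℝ).prod (LinearMap.fst ℝ ℝ ℝ)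

theorem J2Linear_apply (v : ℝ × ℝ) : J2Linear v = J2 v := rfl

theorem ubar_relation {m : ℕ} (uE : Fin 3 → ℤ) (u : ZMod m → Fin 3 → ℤ) (a b : ZMod m → ℤ)
    (hrel : ∀ j, u (j - 1) + u (j + 1) + a j • u j + b j • uE = 0) (j : ZMod m) :
    ubar (u (j - 1)) + ubar (u (j + 1)) + (a j : ℝ) • ubar (u j) + (b j : ℝ) • ubar uE = 0 := by
  have h := congrArg ubarHom (hrel j)
  simpa only [map_add, map_zsmul, map_zero, ubarHom_apply, ← Int.cast_smul_eq_zsmul ℝ] using h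

theorem moment_polygon_closes_general (m : ℕ) [NeZero m]
    (uE : Fin 3 → ℤ) (u : ZMod m → Fin 3 → ℤ) (a b : ZMod m → ℤ)
    (hrel : ∀ j, u (j - 1) + u (j + 1) + a j • u j + b j • uE = 0)
    (hab : ∀ j, a j + b j = -2)
    (wE : ℝ) (w : ZMod m → ℝ) (t : ZMod m → ℝ)
    (ht : ∀ j, t j = w (j - 1) + w (j + 1) + (a j : ℝ) * w j + (b j : ℝ) * wE)
    (p : ℕ → ℝ × ℝ)
    (hp : ∀ j : ℕ, j < m →
      p (j + 1) = p j + t ((j : ZMod m) + 1) • J2 (ubar (u ((j : ZMod m) + 1)) - ubar uE)) :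
    p m = p 0 := by
  have hab' : ∀ j, (a j : ℝ) + b j = -2 := fun j => by exact_mod_cast hab j
  have hsum : ∑ j, t j • (ubar (u j) - ubar uE) = 0 := by
    simpa only [ht] using sum_smul_sub_eq_zero_of_relations _ _ _ _
      (ubar_relation uE u a b hrel) hab' wE w
  have hedges : ∑ j ∈ range m, (p (j + 1) - p j) = 0 := by
    rw [sum_congr rfl fun j hj => by rw [hp j (mem_range.1 hj), add_sub_cancel_left],
      ZMod.sum_range_natCast (fun x => t (x + 1) • J2 (ubar (u (x + 1)) - ubar uE)),
      ZMod.sum_comp_add_one (fun x => t x • J2 (ubar (u x) - ubar uE))]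
    simp only [← J2Linear_apply, ← map_smul, ← map_sum, hsum, map_zero]
  rwa [sum_range_sub, sub_eq_zero] at hedges

/-- Proposition 3.3: the moment polygon closes. With the quadrilateral relations
around an interior ray and `t_j = w_{j-1}+w_{j+1}+a_j w_j+b_j w_E`, the points
`p_j = p_{j-1} + t_j J₂(ū_j − ū_E)` satisfy `p_m = p₀`. -/
theorem moment_polygon_closes (m : ℕ) [NeZero m] (hm : 3 ≤ m)
    (uE : Fin 3 → ℤ) (u : ZMod m → Fin 3 → ℤ) (a b : ZMod m → ℤ)
    (huE : uE 2 = 1) (hu : ∀ j, u j 2 = 1)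
    (hrel : ∀ j, u (j - 1) + u (j + 1) + a j • u j + b j • uE = 0)
    (hab : ∀ j, a j + b j = -2)
    (wE : ℝ) (w : ZMod m → ℝ) (t : ZMod m → ℝ)
    (ht : ∀ j, t j = w (j - 1) + w (j + 1) + (a j : ℝ) * w j + (b j : ℝ) * wE)
    (p : ℕ → ℝ × ℝ)
    (hp : ∀ j : ℕ, j < m →
      p (j + 1) = p j + t ((j : ZMod m) + 1) • J2 (ubar (u ((j : ZMod m) + 1)) - ubar uE)) :
    p m = p 0 :=
  moment_polygon_closes_general m uE u a b hrel hab wE w t ht p hp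
end

section
/- In the ℤ/3ℤ conifold quotient example with f₁ = −f₂ = f₃ and p₁ = (0,0), λ(p₁) = (0,0), the increments λ(p₂)−λ(p₁) = f₂(3,2), λ(p₃)−λ(p₁) = (f₁+f₂)(1,1) = (0,0), λ(p₆)−λ(p₂) = −(f₂+f₃)(2,1) = (0,0) hold, and the resulting heights satisfy ν₃(p₂) = ν₃(p₁), ν₃(p₃) = ν₃(p₁), and ν₃(p₆) − ν₃(p₂) = f₂(w₂+w₃). In particular, if f₂ ≠ 0 and w₂ + w₃ ≠ 0, then ν₃(p₆) ≠ ν₃(p₂), so the lifted graph is non-planar. -/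
/-- In the ℤ/3ℤ conifold quotient example with `f₁ = −f₂ = f₃`, the lifting
functions satisfy `λ(p₃) = λ(p₁)`, `λ(p₆) = λ(p₂)`, the heights satisfy
`ν₃(p₂) = ν₃(p₁)`, `ν₃(p₃) = ν₃(p₁)`, `ν₃(p₆) − ν₃(p₂) = f₂(w₂+w₃)`; hence if
`f₂ ≠ 0` and `w₂ + w₃ ≠ 0` the lifted graph is non-planar. -/
theorem conifold_quotient_lift (f₁ f₂ f₃ w₁ w₂ w₃ : ℝ)
    (hf₁ : f₁ = -f₂) (hf₃ : f₃ = -f₂) :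
    let lam₁ : ℝ × ℝ := (0, 0)
    let lam₂ : ℝ × ℝ := lam₁ + f₂ • ((3 : ℝ), (2 : ℝ))
    let lam₃ : ℝ × ℝ := lam₁ + (f₁ + f₂) • ((1 : ℝ), (1 : ℝ))
    let lam₆ : ℝ × ℝ := lam₂ + (-(f₂ + f₃)) • ((2 : ℝ), (1 : ℝ))
    let n₁ : ℝ := 0
    let n₂ : ℝ := n₁ + (-w₂) * (2 * lam₂.1 + (-3) * lam₂.2)
    let n₃ : ℝ := n₁ + (-(w₁ + w₂)) * (1 * lam₃.1 + (-1) * lam₃.2)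
    let n₆ : ℝ := n₂ + (-(w₂ + w₃)) * (1 * lam₆.1 + (-2) * lam₆.2)
    lam₂ - lam₁ = f₂ • ((3 : ℝ), (2 : ℝ)) ∧
      lam₃ - lam₁ = (0, 0) ∧ lam₆ - lam₂ = (0, 0) ∧
      n₂ = n₁ ∧ n₃ = n₁ ∧ n₆ - n₂ = f₂ * (w₂ + w₃) ∧
      (f₂ ≠ 0 → w₂ + w₃ ≠ 0 → n₆ ≠ n₂) := by
  intro lam₁ lam₂ lam₃ lam₆ n₁ n₂ n₃ n₆
  have hlam₂ : lam₂ = (3 * f₂, 2 * f₂) := by simp [lam₂, lam₁, mul_comm]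
  have hlam₃ : lam₃ = 0 := by simp [lam₃, lam₁, hf₁]
  have hlam₆ : lam₆ = lam₂ := by simp [lam₆, hf₃]
  -- the stabiliser direction (2, -3) of the edge p₁p₂ is orthogonal to λ(p₂) ∈ ℝ • (3, 2)
  have hn₂ : n₂ = n₁ := by
    simp only [n₂, hlam₂]
    ring
  have height_jump : n₆ - n₂ = f₂ * (w₂ + w₃) := by
    simp only [n₆, hlam₆, hlam₂]
    ring
  refine ⟨by simp [lam₂, lam₁], by simp [hlam₃, lam₁], by rw [hlam₆, sub_self]; rfl, hn₂,
    by simp [n₃, hlam₃], height_jump,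
    fun hf₂ hw => sub_ne_zero.mp (height_jump ▸ mul_ne_zero hf₂ hw)⟩
end
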